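/- arXiv:math/0406109 — 2 statements merged into one kernel-verified Lean document; each statement's English description precedes it below -/
import Mathlib

section
/- Let g_n (n ∈ ℕ) and g be positive concave functions on the interval [1,∞) such that for every x ∈ [1,∞) the sequence (g_n(x)) is nonincreasing in n and converges to g(x). Then the functions x ↦ g_n(x)/x converge to x ↦ g(x)/x uniformly on [1,∞). -/
/-!
Write `Dₙ = gₙ - g ≥ 0`; it suffices that eventually `Dₙ(x) < εx` for all `x ≥ 1`. A concave
function bounded below on `[1,∞)` is nondecreasing. Near `1`, where the limit `g` may jump, use a
point `u > 1` at which `g` is within `ε/2` of its infimum on `(1,∞)`, and monotonicity of `gₙ`.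
On the compact `[u, R] ⊂ (1,∞)` all functions are continuous and Dini's theorem applies. Beyond
`R`, chosen so that the secant slope of `g` from `1` to `R` is within `ε/2` of its limit,
concavity of `gₙ` gives `Dₙ(x) ≤ Dₙ(1) + (x - 1)(Dₙ(R)/(R - 1) + ε/2)`.
-/

open Filter Topology Set

lemma ConcaveOn.monotoneOn_of_bddBelow {f : ℝ → ℝ} {a : ℝ} (hf : ConcaveOn ℝ (Ici a) f)
    (hbdd : BddBelow (f '' Ici a)) : MonotoneOn f (Ici a) := by
  intro x hx y hy hxy
  by_contra! hyx
  obtain ⟨c, hc⟩ := hbdd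
  have hxy' : x < y := hxy.lt_of_ne (by rintro rfl; exact lt_irrefl _ hyx)
  have hs : slope f x y < 0 := (slope_neg_iff_of_le hxy).2 hyx
  -- beyond `y`, `f` lies below its secant through `x` and `y`, which has negative slope
  have hline : Tendsto (fun z => slope f x y * (z + -x) + f x) atTop atBot :=
    tendsto_atBot_add_const_right _ _
      ((tendsto_atTop_add_const_right _ (-x) tendsto_id).const_mul_atTop_of_neg hs)
  obtain ⟨z, hzc, hyz⟩ := ((hline.eventually_lt_atBot c).and (eventually_gt_atTop y)).exists
  have hz : z ∈ Ici a := mem_Ici.2 (le_trans hy hyz.le)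
  have hxz : x < z := hxy'.trans hyz
  have hslope : slope f x z ≤ slope f x y :=
    hf.antitoneOn_slope_gt hx ⟨hy, hxy'⟩ ⟨hz, hxz⟩ hyz.le
  have hfz : (z - x) * slope f x z + f x = f z := by
    simpa only [smul_eq_mul, vadd_eq_add] using sub_smul_slope_vadd f x z
  have hsecant := mul_le_mul_of_nonneg_left hslope (sub_nonneg.2 hxz.le)
  linarith [hc (mem_image_of_mem f hz)]

lemma exists_forall_lt_add_of_bddBelow {α : Type*} {s : Set α} {f : α → ℝ} (hs : s.Nonempty)
    (hf : BddBelow (f '' s)) {ε : ℝ} (hε : 0 < ε) : ∃ u ∈ s, ∀ x ∈ s, f u < f x + ε := by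
  obtain ⟨_, ⟨u, hu, rfl⟩, hlt⟩ := exists_lt_of_csInf_lt (hs.image f) (lt_add_of_pos_right _ hε)
  exact ⟨u, hu, fun x hx => hlt.trans_le (by gcongr; exact csInf_le hf (mem_image_of_mem f hx))⟩

lemma ConcaveOn.sub_le_of_slope_le {f h : ℝ → ℝ} {a R x δ : ℝ} (hf : ConcaveOn ℝ (Ici a) f)
    (haR : a < R) (hRx : R ≤ x) (hslope : slope h a R ≤ slope h a x + δ) :
    f x - h x ≤ f a - h a + (x - a) * (slope f a R - slope h a R + δ) := by
  have hax : a < x := haR.trans_le hRx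
  have hf' : slope f a x ≤ slope f a R :=
    hf.antitoneOn_slope_gt self_mem_Ici ⟨mem_Ici.2 haR.le, haR⟩ ⟨mem_Ici.2 hax.le, hax⟩ hRx
  have hfx : (x - a) * slope f a x + f a = f x := by
    simpa only [smul_eq_mul, vadd_eq_add] using sub_smul_slope_vadd f a x
  have hhx : (x - a) * slope h a x + h a = h x := by
    simpa only [smul_eq_mul, vadd_eq_add] using sub_smul_slope_vadd h a x
  have hslopes := mul_le_mul_of_nonneg_left (by linarith : slope f a x - slope h a x ≤
    slope f a R - slope h a R + δ) (sub_nonneg.2 hax.le)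
  linarith

section

variable {ι : Type*} {g : ι → ℝ → ℝ} {h : ℝ → ℝ} {ε : ℝ}

lemma tendstoUniformlyOn_div_of_sub_lt_mul {l : Filter ι} {s : Set ℝ} (hs : ∀ x ∈ s, 0 < x)
    (hle : ∀ i, ∀ x ∈ s, h x ≤ g i x)
    (H : ∀ ε > 0, ∀ᶠ i in l, ∀ x ∈ s, g i x - h x < ε * x) :
    TendstoUniformlyOn (fun i x => g i x / x) (fun x => h x / x) l s := by
  rw [Metric.tendstoUniformlyOn_iff]
  intro ε hε
  filter_upwards [H ε hε] with i hi x hx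
  rw [dist_comm, Real.dist_eq, ← sub_div,
    abs_of_nonneg (div_nonneg (sub_nonneg.2 (hle i x hx)) (hs x hx).le), div_lt_iff₀ (hs x hx)]
  exact hi x hx

lemma eventually_forall_Icc_one_sub_lt_mul_of_monotoneOn {l : Filter ι} {u : ℝ}
    (hmono : ∀ i, MonotoneOn (g i) (Ici 1)) (hlim1 : Tendsto (g · 1) l (𝓝 (h 1)))
    (hlimu : Tendsto (g · u) l (𝓝 (h u))) (hu : 1 < u) (hhu : ∀ x ∈ Ioi 1, h u < h x + ε / 2)
    (hε : 0 < ε) : ∀ᶠ i in l, ∀ x ∈ Icc 1 u, g i x - h x < ε * x := by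
  filter_upwards [hlim1.eventually_lt_const (lt_add_of_pos_right _ hε),
    hlimu.eventually_lt_const (lt_add_of_pos_right _ (half_pos hε))] with i hi1 hiu x hx
  obtain ⟨hx1, hxu⟩ := hx
  rcases hx1.eq_or_lt with rfl | hx1
  · linarith
  · calc g i x - h x ≤ g i u - h x := by
          gcongr
          exact hmono i (mem_Ici.2 hx1.le) (mem_Ici.2 hu.le) hxu
      _ < ε := by linarith [hhu x hx1]
      _ ≤ ε * x := le_mul_of_one_le_right hε.le hx1.le

lemma eventually_forall_Icc_sub_lt_mul_of_concaveOn [Preorder ι] {u R : ℝ}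
    (hconc : ∀ i, ConcaveOn ℝ (Ici 1) (g i)) (hh : ConcaveOn ℝ (Ici 1) h)
    (hanti : ∀ x ∈ Ici 1, Antitone (g · x))
    (hlim : ∀ x ∈ Ici 1, Tendsto (g · x) atTop (𝓝 (h x))) (hu : 1 < u) (hε : 0 < ε) :
    ∀ᶠ i in atTop, ∀ x ∈ Icc u R, g i x - h x < ε * x := by
  have hK : Icc u R ⊆ interior (Ici 1) := by
    rw [interior_Ici]
    exact fun x hx => hu.trans_le hx.1
  have hKs : Icc u R ⊆ Ici 1 := hK.trans interior_subset
  have hdini := Antitone.tendstoUniformlyOn_of_forall_tendsto isCompact_Icc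
    (fun i => (hconc i).continuousOn_interior.mono hK) (fun x hx => hanti x (hKs hx))
    (hh.continuousOn_interior.mono hK) (fun x hx => hlim x (hKs hx))
  filter_upwards [Metric.tendstoUniformlyOn_iff.1 hdini ε hε] with i hi x hx
  calc g i x - h x < ε := (abs_sub_lt_iff.1 (hi x hx)).2
    _ ≤ ε * x := le_mul_of_one_le_right hε.le (hKs hx)

lemma eventually_forall_Ici_sub_lt_mul_of_concaveOn {l : Filter ι} {R : ℝ}
    (hconc : ∀ i, ConcaveOn ℝ (Ici 1) (g i)) (hle : ∀ i, ∀ x ∈ Ici 1, h x ≤ g i x)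
    (hlim1 : Tendsto (g · 1) l (𝓝 (h 1))) (hlimR : Tendsto (g · R) l (𝓝 (h R))) (hR : 1 < R)
    (hslope : ∀ x ∈ Ioi 1, slope h 1 R < slope h 1 x + ε / 2) (hε : 0 < ε) :
    ∀ᶠ i in l, ∀ x ∈ Ici R, g i x - h x < ε * x := by
  have hdefect : Tendsto (fun i => g i 1 - h 1 + (g i R - h R) / (R - 1)) l (𝓝 0) := by
    simpa using (hlim1.sub_const (h 1)).add ((hlimR.sub_const (h R)).div_const (R - 1))
  filter_upwards [hdefect.eventually_lt_const (half_pos hε)] with i hi x hx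
  have hx1 : 1 < x := hR.trans_le hx
  have hbound := (hconc i).sub_le_of_slope_le hR hx (hslope x hx1).le
  have hslope_sub : slope (g i) 1 R - slope h 1 R ≤ (g i R - h R) / (R - 1) := by
    rw [slope_def_field, slope_def_field, div_sub_div_same,
      div_le_div_iff_of_pos_right (sub_pos.2 hR)]
    linarith [hle i 1 self_mem_Ici]
  have hD1 := sub_nonneg.2 (hle i 1 self_mem_Ici)
  have hDR := div_nonneg (sub_nonneg.2 (hle i R (mem_Ici.2 hR.le))) (sub_nonneg.2 hR.le)
  nlinarith [mul_le_mul_of_nonneg_left hslope_sub (sub_nonneg.2 hx1.le),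
    mul_lt_mul_of_pos_left hi (zero_lt_one.trans hx1)]

end

/-- **Dini-type lemma for concave functions.** Let `gₙ` and `g` be positive concave
functions on `[1,∞)` such that for every `x` the sequence `gₙ(x)` is nonincreasing
in `n` and converges to `g(x)`. Then `x ↦ gₙ(x)/x` converges to `x ↦ g(x)/x`
uniformly on `[1,∞)`. -/
theorem concave_div_tendstoUniformly (g : ℕ → ℝ → ℝ) (gl : ℝ → ℝ)
    (hconc : ∀ n, ConcaveOn ℝ (Set.Ici 1) (g n))
    (hpos : ∀ n, ∀ x ∈ Set.Ici (1 : ℝ), 0 < g n x)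
    (hlconc : ConcaveOn ℝ (Set.Ici 1) gl)
    (hlpos : ∀ x ∈ Set.Ici (1 : ℝ), 0 < gl x)
    (hanti : ∀ x ∈ Set.Ici (1 : ℝ), ∀ m n : ℕ, m ≤ n → g n x ≤ g m x)
    (hlim : ∀ x ∈ Set.Ici (1 : ℝ), Tendsto (fun n => g n x) atTop (𝓝 (gl x))) :
    TendstoUniformlyOn (fun n x => g n x / x) (fun x => gl x / x) atTop
      (Set.Ici 1) := by
  have hbdd {f : ℝ → ℝ} (hf : ∀ x ∈ Ici (1 : ℝ), 0 < f x) : BddBelow (f '' Ici 1) :=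
    ⟨0, forall_mem_image.2 fun x hx => (hf x hx).le⟩
  have hmono n : MonotoneOn (g n) (Ici 1) := (hconc n).monotoneOn_of_bddBelow (hbdd (hpos n))
  have hantitone : ∀ x ∈ Ici (1 : ℝ), Antitone (g · x) := fun x hx _ _ => hanti x hx _ _
  have hle n : ∀ x ∈ Ici (1 : ℝ), gl x ≤ g n x := fun x hx =>
    (hantitone x hx).le_of_tendsto (hlim x hx) n
  refine tendstoUniformlyOn_div_of_sub_lt_mul (fun x hx => one_pos.trans_le hx) hle
    fun ε hε => ?_
  obtain ⟨u, hu, hgu⟩ := exists_forall_lt_add_of_bddBelow nonempty_Ioi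
    ((hbdd hlpos).mono (image_mono Ioi_subset_Ici_self)) (half_pos hε)
  obtain ⟨R, hR, hslope⟩ := exists_forall_lt_add_of_bddBelow (f := slope gl 1) nonempty_Ioi
    ⟨0, forall_mem_image.2 fun x hx => (hlconc.monotoneOn_of_bddBelow (hbdd hlpos)).slope_nonneg
      self_mem_Ici (mem_Ici.2 (le_of_lt hx))⟩ (half_pos hε)
  filter_upwards [eventually_forall_Icc_one_sub_lt_mul_of_monotoneOn hmono (hlim 1 self_mem_Ici)
      (hlim u (mem_Ici.2 (le_of_lt hu))) hu hgu hε,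
    eventually_forall_Icc_sub_lt_mul_of_concaveOn (R := R) hconc hlconc hantitone hlim hu hε,
    eventually_forall_Ici_sub_lt_mul_of_concaveOn hconc hle (hlim 1 self_mem_Ici)
      (hlim R (mem_Ici.2 (le_of_lt hR))) hR hslope hε] with n hnear hmid htail x hx
  rcases le_or_gt x u with hxu | hux
  · exact hnear x ⟨hx, hxu⟩
  rcases le_or_gt x R with hxR | hRx
  · exact hmid x ⟨hux.le, hxR⟩
  · exact htail x hRx.le
end

section
/- The multiplier ideal of a psh function is integrally closed: let u be psh on a neighborhood of 0 in ℂ². Then J(u) is an ideal of the ring O₀ of holomorphic germs at 0, and whenever a germ ψ ∈ O₀ satisfies an equation of integral dependence ψ^n + a₁ψ^{n−1} + ⋯ + a_n = 0 on a neighborhood of 0, with n ≥ 1 and a_i ∈ J(u)^i (the i-th power of the ideal J(u)) for each 1 ≤ i ≤ n, then ψ ∈ J(u). -/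
/-!
`J(u)` consists of the holomorphic germs that are locally in `L²(e^{-2u} dλ)`; this description
only needs the weight to be measurable near `0`, which follows from the upper semicontinuity of
`u`. By Hölder's inequality a product of `i` elements of `J(u)` is locally in `L^{2/i}`, hence so
is every `aᵢ ∈ J(u)ⁱ`. At each point an equation of integral dependence forces `|ψ|ⁱ ≤ n |aᵢ|`
for some `i`, so `|ψ| ≤ n ∑ᵢ |aᵢ|^{1/i}`, and the right-hand side is locally in `L²`.
-/

open MeasureTheory Filter Metric Topology Set

noncomputable section

/-- A nonnegative extended-real-valued function on `ℂ²` is locally integrable at `0`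
if its Lebesgue integral over some neighborhood of `0` is finite. -/
def LocIntegrableAtZero (f : ℂ × ℂ → ENNReal) : Prop :=
  ∃ V ∈ 𝓝 (0 : ℂ × ℂ), ∫⁻ x in V, f x < ⊤

/-- The exponential of an extended real number, valued in `[0,∞]`. -/
noncomputable def expE (x : EReal) : ENNReal :=
  if x = ⊥ then 0 else if x = ⊤ then ⊤ else ENNReal.ofReal (Real.exp x.toReal)

/-- The submean value inequality on the circle `{a + e^{iθ} b}`, expressed via
continuous majorants (for an upper semicontinuous `u` this is equivalent to
`u a ≤ (1/2π) ∫₀^{2π} u (a + e^{iθ} b) dθ`). -/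
def SubmeanAt (u : ℂ × ℂ → EReal) (a b : ℂ × ℂ) : Prop :=
  ∀ f : ℝ → ℝ, Continuous f →
    (∀ θ : ℝ, u (a + Complex.exp (θ * Complex.I) • b) ≤ ((f θ : ℝ) : EReal)) →
    u a ≤ (((1 / (2 * Real.pi)) * ∫ θ in (0:ℝ)..(2 * Real.pi), f θ : ℝ) : EReal)

/-- `u : ℂ² → [−∞,∞)` is plurisubharmonic on `Ω`. -/
structure IsPshOn (Ω : Set (ℂ × ℂ)) (u : ℂ × ℂ → EReal) : Prop where
  usc : UpperSemicontinuousOn u Ω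
  ne_top : ∀ x ∈ Ω, u x ≠ ⊤
  not_bot : ∀ x ∈ Ω, ∃ y ∈ connectedComponentIn Ω x, u y ≠ ⊥
  submean : ∀ a ∈ Ω, ∀ b : ℂ × ℂ,
    (∀ τ : ℂ, ‖τ‖ ≤ 1 → a + τ • b ∈ Ω) → SubmeanAt u a b

/-- The set of `c > 0` such that `exp (−2 c u)` is locally integrable at `0`.
The singularity exponent `c(u)` is the supremum of this set. -/
def intExps (u : ℂ × ℂ → EReal) : Set ℝ :=
  {c | 0 < c ∧ LocIntegrableAtZero (fun x => expE (((-2 * c : ℝ) : EReal) * u x))}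

/-- The Arnold multiplicity `λ(u) = 1/c(u)` (with `1/∞ = 0`). -/
noncomputable def arnoldMult (u : ℂ × ℂ → EReal) : ℝ :=
  sInf ((fun c => 1 / c) '' intExps u)

/-- `ℓ` is the Lelong number of `u` at `0`:
`ℓ = lim_{r→0⁺} (sup_{‖q‖<r} u)/log r`. -/
def HasLelong (u : ℂ × ℂ → EReal) (ℓ : ℝ) : Prop :=
  Tendsto (fun r : ℝ => (sSup (u '' ball (0 : ℂ × ℂ) r)).toReal / Real.log r)
    (𝓝[>] 0) (𝓝 ℓ)


/-- `ψ` (a holomorphic germ at `0 ∈ ℂ²`) belongs to the multiplier ideal `J(u)`: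
`ψ` is holomorphic near `0` and `|ψ|² exp(−2u)` is locally integrable at `0`. -/
def MemMultIdeal (u : ℂ × ℂ → EReal) (ψ : ℂ × ℂ → ℂ) : Prop :=
  AnalyticAt ℂ ψ 0 ∧ LocIntegrableAtZero
    (fun q => ENNReal.ofReal (‖ψ q‖ ^ 2) *
      expE (((-2 : ℝ) : EReal) * u q))

/-- `a` belongs (as a germ at `0`) to the `i`-th power `J(u)^i` of the multiplier
ideal: near `0`, `a` is a finite sum of products of `i` elements of `J(u)`. -/
def MemMultIdealPow (u : ℂ × ℂ → EReal) (i : ℕ) (a : ℂ × ℂ → ℂ) : Prop :=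
  ∃ (k : ℕ) (b : Fin k → Fin i → ℂ × ℂ → ℂ),
    (∀ j l, MemMultIdeal u (b j l)) ∧
    ∀ᶠ x in 𝓝 (0 : ℂ × ℂ), a x = ∑ j, ∏ l, b j l x

open scoped ENNReal

theorem exists_pow_le_mul_of_pow_le_sum {n : ℕ} {t : ℝ} {c : Fin n → ℝ} (hc : ∀ i, 0 ≤ c i)
    (h : t ^ n ≤ ∑ i, c i * t ^ (n - (i.val + 1))) :
    ∃ i : Fin n, t ^ (i.val + 1) ≤ n * c i := by
  by_contra! hlt
  rcases Nat.eq_zero_or_pos n with rfl | hn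
  · norm_num at h
  have ht : 0 < t := by
    simpa using (mul_nonneg n.cast_nonneg (hc ⟨0, hn⟩)).trans_lt (hlt ⟨0, hn⟩)
  have hsplit : ∀ i : Fin n, t ^ (i.val + 1) * t ^ (n - (i.val + 1)) = t ^ n := fun i => by
    rw [← pow_add, Nat.add_sub_cancel' i.isLt]
  have : (n : ℝ) * t ^ n < n * t ^ n := calc
    (n : ℝ) * t ^ n ≤ n * ∑ i, c i * t ^ (n - (i.val + 1)) := by gcongr
    _ = ∑ i, n * c i * t ^ (n - (i.val + 1)) := by simp only [Finset.mul_sum, mul_assoc]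
    _ < ∑ i : Fin n, t ^ (i.val + 1) * t ^ (n - (i.val + 1)) :=
      Finset.sum_lt_sum_of_nonempty ⟨⟨0, hn⟩, Finset.mem_univ _⟩ fun i _ => by
        gcongr
        exact hlt i
    _ = n * t ^ n := by simp [hsplit]
  exact lt_irrefl _ this

theorem le_mul_sum_rpow_inv_of_pow_le_sum {n : ℕ} {t : ℝ} {c : Fin n → ℝ} (hc : ∀ i, 0 ≤ c i)
    (h : t ^ n ≤ ∑ i, c i * t ^ (n - (i.val + 1))) :
    t ≤ n * ∑ i : Fin n, c i ^ ((i.val + 1 : ℕ) : ℝ)⁻¹ := by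
  obtain ⟨i, hi⟩ := exists_pow_le_mul_of_pow_le_sum hc h
  have hn : 1 ≤ (n : ℝ) := Nat.one_le_cast.2 (Nat.one_le_of_lt i.isLt)
  have hroot : t ≤ n * c i ^ ((i.val + 1 : ℕ) : ℝ)⁻¹ := by
    refine le_of_pow_le_pow_left₀ (Nat.succ_ne_zero i.val)
      (mul_nonneg n.cast_nonneg (Real.rpow_nonneg (hc i) _)) ?_
    rw [mul_pow, Real.rpow_inv_natCast_pow (hc i) (Nat.succ_ne_zero i.val)]
    calc t ^ (i.val + 1) ≤ n * c i := hi
      _ ≤ n ^ (i.val + 1) * c i :=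
        mul_le_mul_of_nonneg_right (le_self_pow₀ hn (Nat.succ_ne_zero i.val)) (hc i)
  refine hroot.trans ?_
  gcongr
  exact Finset.single_le_sum (f := fun j : Fin n => c j ^ ((j.val + 1 : ℕ) : ℝ)⁻¹)
    (fun j _ => Real.rpow_nonneg (hc j) _) (Finset.mem_univ i)

theorem expE_monotone : Monotone expE := by
  intro x y h
  induction x using EReal.rec <;> induction y using EReal.rec <;>
    simp_all [expE, ENNReal.ofReal_le_ofReal]

theorem UpperSemicontinuousOn.aemeasurable {δ β : Type*} [TopologicalSpace δ]
    [MeasurableSpace δ] [OpensMeasurableSpace δ] [LinearOrder β] [OrderTop β]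
    [TopologicalSpace β] [OrderTopology β] [SecondCountableTopology β] [MeasurableSpace β]
    [BorelSpace β] {f : δ → β} {s : Set δ} {μ : Measure δ} (hs : IsOpen s)
    (hf : UpperSemicontinuousOn f s) : AEMeasurable f (μ.restrict s) := by
  classical
  -- extended by `⊤` off the open set `s`, `f` becomes upper semicontinuous everywhere
  have hg : UpperSemicontinuous (s.piecewise f ⊤) := by
    intro x c hc
    by_cases hx : x ∈ s
    · rw [piecewise_eq_of_mem _ _ _ hx] at hc
      have hfc := hf x hx c hc
      rw [nhdsWithin_eq_nhds.2 (hs.mem_nhds hx)] at hfc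
      filter_upwards [hfc, hs.mem_nhds hx] with y hy hys
      rwa [piecewise_eq_of_mem _ _ _ hys]
    · rw [piecewise_eq_of_notMem _ _ _ hx] at hc
      exact absurd hc not_top_lt
  exact hg.measurable.aemeasurable.congr
    (ae_restrict_of_forall_mem hs.measurableSet fun x hx => piecewise_eq_of_mem _ _ _ hx)

theorem AnalyticAt.stronglyMeasurableAtFilter {𝕜 E F : Type*} [NontriviallyNormedField 𝕜]
    [NormedAddCommGroup E] [NormedSpace 𝕜 E] [MeasurableSpace E] [OpensMeasurableSpace E]
    [NormedAddCommGroup F] [NormedSpace 𝕜 F] [CompleteSpace F]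
    [SecondCountableTopologyEither E F] {μ : Measure E} {f : E → F} {x : E}
    (hf : AnalyticAt 𝕜 f x) : StronglyMeasurableAtFilter f (𝓝 x) μ :=
  ContinuousOn.stronglyMeasurableAtFilter (isOpen_analyticAt 𝕜 f)
    (fun _ hy => hy.continuousAt.continuousWithinAt) x hf

namespace MeasureTheory

variable {α E 𝕜 : Type*} [MeasurableSpace α] [NormedAddCommGroup E] {μ : Measure α}
  {l : Filter α} {p : ℝ≥0∞}

theorem memLp_two_withDensity_iff {w : α → ℝ≥0∞} {f : α → E} (hw : AEMeasurable w μ)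
    (hf : AEStronglyMeasurable f μ) :
    MemLp f 2 (μ.withDensity w) ↔ ∫⁻ x, ENNReal.ofReal (‖f x‖ ^ 2) * w x ∂μ < ∞ := by
  rw [MemLp, and_iff_right (hf.mono_ac (withDensity_absolutelyContinuous μ w)),
    eLpNorm_lt_top_iff_lintegral_rpow_enorm_lt_top two_ne_zero ENNReal.ofNat_ne_top,
    lintegral_withDensity_eq_lintegral_mul₀ hw (hf.enorm.pow_const _)]
  simp only [Pi.mul_apply, ENNReal.toReal_ofNat, ENNReal.rpow_two, ← ofReal_norm,
    ENNReal.ofReal_pow (norm_nonneg _), mul_comm (w _)]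

section MemLpAtFilter

variable {f g : α → E}

def MemLpAtFilter (f : α → E) (p : ℝ≥0∞) (l : Filter α) (μ : Measure α) : Prop :=
  ∃ s ∈ l, MemLp f p (μ.restrict s)

theorem memLpAtFilter_iff_eventually :
    MemLpAtFilter f p l μ ↔ ∀ᶠ s in l.smallSets, MemLp f p (μ.restrict s) :=
  (eventually_smallSets' fun _ _ hst h => h.mono_measure (Measure.restrict_mono hst le_rfl)).symm

theorem MemLp.memLpAtFilter (hf : MemLp f p μ) : MemLpAtFilter f p l μ :=
  ⟨univ, univ_mem, hf.mono_measure Measure.restrict_le_self⟩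

theorem MemLpAtFilter.add (hf : MemLpAtFilter f p l μ) (hg : MemLpAtFilter g p l μ) :
    MemLpAtFilter (f + g) p l μ := by
  rw [memLpAtFilter_iff_eventually] at *
  filter_upwards [hf, hg] with s hfs hgs using hfs.add hgs

theorem MemLpAtFilter.finsetSum {ι : Type*} {s : Finset ι} {f : ι → α → E}
    (hf : ∀ i ∈ s, MemLpAtFilter (f i) p l μ) : MemLpAtFilter (fun x => ∑ i ∈ s, f i x) p l μ := by
  simp only [memLpAtFilter_iff_eventually] at *
  filter_upwards [(eventually_all_finset s).2 hf] with t ht using memLp_finsetSum s ht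

theorem MemLpAtFilter.norm_rpow_div (hf : MemLpAtFilter f p l μ) (q : ℝ≥0∞) :
    MemLpAtFilter (fun x => ‖f x‖ ^ q.toReal) (p / q) l μ :=
  let ⟨s, hs, hfs⟩ := hf
  ⟨s, hs, hfs.norm_rpow_div q⟩

theorem MemLpAtFilter.const_mul [NormedRing 𝕜] {f : α → 𝕜} (hf : MemLpAtFilter f p l μ) (c : 𝕜) :
    MemLpAtFilter (fun x => c * f x) p l μ :=
  let ⟨s, hs, hfs⟩ := hf
  ⟨s, hs, hfs.const_mul c⟩

theorem MemLpAtFilter.mul [NormedRing 𝕜] {q r : ℝ≥0∞} {f φ : α → 𝕜}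
    (hf : MemLpAtFilter f q l μ) (hφ : MemLpAtFilter φ p l μ) [p.HolderTriple q r] :
    MemLpAtFilter (fun x => φ x * f x) r l μ := by
  rw [memLpAtFilter_iff_eventually] at *
  filter_upwards [hf, hφ] with s hfs hφs using hfs.mul' hφs

theorem MemLpAtFilter.prod [NormedCommRing 𝕜] {ι : Type*} {s : Finset ι} {f : ι → α → 𝕜}
    {p : ι → ℝ≥0∞} (hf : ∀ i ∈ s, MemLpAtFilter (f i) (p i) l μ) :
    MemLpAtFilter (fun x => ∏ i ∈ s, f i x) (∑ i ∈ s, (p i)⁻¹)⁻¹ l μ := by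
  simp only [memLpAtFilter_iff_eventually] at *
  filter_upwards [(eventually_all_finset s).2 hf] with t ht using MemLp.prod' ht

variable [IsMeasurablyGenerated l]

theorem MemLpAtFilter.congr (hf : MemLpAtFilter f p l μ) (hfg : f =ᶠ[l] g) :
    MemLpAtFilter g p l μ := by
  obtain ⟨s, hs, hsm, hfs, hfgs⟩ :=
    (memLpAtFilter_iff_eventually.1 hf |>.and <|
      eventually_smallSets_forall.2 hfg).exists_measurable_mem_of_smallSets
  exact ⟨s, hs, hfs.ae_eq (ae_restrict_of_forall_mem hsm hfgs)⟩

theorem MemLpAtFilter.of_le {F : Type*} [NormedAddCommGroup F] {g : α → F}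
    (hg : MemLpAtFilter g p l μ) (hf : StronglyMeasurableAtFilter f l μ)
    (hfg : ∀ᶠ x in l, ‖f x‖ ≤ ‖g x‖) : MemLpAtFilter f p l μ := by
  obtain ⟨s, hs, hsm, hgs, hfs, hfgs⟩ :=
    (memLpAtFilter_iff_eventually.1 hg |>.and <| hf.eventually.and <|
      eventually_smallSets_forall.2 hfg).exists_measurable_mem_of_smallSets
  exact ⟨s, hs, hgs.of_le hfs (ae_restrict_of_forall_mem hsm hfgs)⟩

theorem _root_.ContinuousAt.memLpAtFilter_top [TopologicalSpace α] {x : α}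
    [IsMeasurablyGenerated (𝓝 x)] (hf : ContinuousAt f x)
    (hm : StronglyMeasurableAtFilter f (𝓝 x) μ) : MemLpAtFilter f ∞ (𝓝 x) μ := by
  refine (memLp_top_const (‖f x‖ + 1)).memLpAtFilter.of_le hm ?_
  filter_upwards [hf.norm.eventually_lt continuousAt_const (lt_add_one ‖f x‖)] with y hy
  rw [Real.norm_of_nonneg (by positivity)]
  exact hy.le

theorem memLpAtFilter_of_pow_add_sum_eq_zero [NormedDivisionRing 𝕜] {n : ℕ} {ψ : α → 𝕜}
    {a : Fin n → α → 𝕜} (hψ : StronglyMeasurableAtFilter ψ l μ)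
    (ha : ∀ i : Fin n, MemLpAtFilter (a i) (p / (i.val + 1 : ℕ)) l μ)
    (heq : ∀ᶠ x in l, ψ x ^ n + ∑ i, a i x * ψ x ^ (n - (i.val + 1)) = 0) :
    MemLpAtFilter ψ p l μ := by
  have hroot : ∀ i : Fin n,
      MemLpAtFilter (fun x => ‖a i x‖ ^ ((i.val + 1 : ℕ) : ℝ)⁻¹) p l μ := fun i => by
    have hk : ((i.val + 1 : ℕ) : ℝ≥0∞) ≠ 0 := by exact_mod_cast Nat.succ_ne_zero i.val
    convert (ha i).norm_rpow_div ((i.val + 1 : ℕ) : ℝ≥0∞)⁻¹ using 2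
    · rw [ENNReal.toReal_inv, ENNReal.toReal_natCast]
    · rw [div_eq_mul_inv _ _⁻¹, inv_inv, ENNReal.div_mul_cancel hk (ENNReal.natCast_ne_top _)]
  refine ((MemLpAtFilter.finsetSum (s := Finset.univ) fun i _ => hroot i).const_mul
    (n : ℝ)).of_le hψ ?_
  filter_upwards [heq] with x hx
  rw [Real.norm_of_nonneg (by positivity)]
  refine le_mul_sum_rpow_inv_of_pow_le_sum (fun i => norm_nonneg (a i x)) ?_
  calc ‖ψ x‖ ^ n = ‖∑ i, a i x * ψ x ^ (n - (i.val + 1))‖ := by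
        rw [← norm_pow, eq_neg_of_add_eq_zero_left hx, norm_neg]
    _ ≤ ∑ i, ‖a i x‖ * ‖ψ x‖ ^ (n - (i.val + 1)) :=
        (norm_sum_le _ _).trans_eq (by simp only [norm_mul, norm_pow])

end MemLpAtFilter

end MeasureTheory

def weightedVolume (u : ℂ × ℂ → EReal) : Measure (ℂ × ℂ) :=
  volume.withDensity fun x => expE (((-2 : ℝ) : EReal) * u x)

section MultiplierIdeal

variable {u : ℂ × ℂ → EReal} {Ω : Set (ℂ × ℂ)} (hΩ : Ω ∈ 𝓝 0)
  (hw : AEMeasurable (fun x => expE (((-2 : ℝ) : EReal) * u x)) (volume.restrict Ω))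
include hΩ hw

theorem memMultIdeal_iff {ψ : ℂ × ℂ → ℂ} :
    MemMultIdeal u ψ ↔ AnalyticAt ℂ ψ 0 ∧ MemLpAtFilter ψ 2 (𝓝 0) (weightedVolume u) := by
  refine and_congr_right fun hψ => ?_
  have hmeas : ∀ᶠ s in (𝓝 (0 : ℂ × ℂ)).smallSets,
      AEMeasurable (fun x => expE (((-2 : ℝ) : EReal) * u x)) (volume.restrict s) ∧
        AEStronglyMeasurable ψ (volume.restrict s) :=
    ((eventually_smallSets' fun _ _ hst h => h.mono_set hst).2 ⟨Ω, hΩ, hw⟩).and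
      hψ.stronglyMeasurableAtFilter.eventually
  rw [LocIntegrableAtZero,
    ← eventually_smallSets' fun _ _ hst h => (lintegral_mono_set hst).trans_lt h,
    memLpAtFilter_iff_eventually]
  refine eventually_congr (hmeas.mono fun s hs => ?_)
  rw [weightedVolume, restrict_withDensity', memLp_two_withDensity_iff hs.1 hs.2]

theorem MemMultIdealPow.memLpAtFilter {m : ℕ} {a : ℂ × ℂ → ℂ} (ha : MemMultIdealPow u m a) :
    MemLpAtFilter a (2 / m) (𝓝 0) (weightedVolume u) := by
  obtain ⟨k, b, hb, hab⟩ := ha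
  have hexp : (∑ _l : Fin m, (2 : ℝ≥0∞)⁻¹)⁻¹ = 2 / m := by
    rw [Finset.sum_const, Finset.card_univ, Fintype.card_fin, nsmul_eq_mul,
      ENNReal.mul_inv (Or.inr (by simp)) (Or.inl (ENNReal.natCast_ne_top m)), inv_inv,
      mul_comm, div_eq_mul_inv]
  have hprod : ∀ j, MemLpAtFilter (fun x => ∏ l, b j l x) (2 / m) (𝓝 0) (weightedVolume u) :=
    fun j => hexp ▸ MemLpAtFilter.prod fun l _ => ((memMultIdeal_iff hΩ hw).1 (hb j l)).2
  exact (MemLpAtFilter.finsetSum fun j _ => hprod j).congr (EventuallyEq.symm hab)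

end MultiplierIdeal

/-- **The multiplier ideal of a psh function is an integrally closed ideal** of the
ring `O₀` of holomorphic germs at `0 ∈ ℂ²`: it contains `0`, is closed under
addition and under multiplication by holomorphic germs, and whenever a germ `ψ`
satisfies an equation of integral dependence
`ψⁿ + a₁ ψ^{n−1} + ⋯ + aₙ = 0` near `0` with `n ≥ 1` and `aᵢ ∈ J(u)ⁱ`,
then `ψ ∈ J(u)`. -/
theorem multiplier_ideal_integrally_closed (u : ℂ × ℂ → EReal) (Ω : Set (ℂ × ℂ))
    (hΩ : IsOpen Ω) (h0 : (0 : ℂ × ℂ) ∈ Ω) (hpsh : IsPshOn Ω u) :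
    MemMultIdeal u (fun _ => 0) ∧
    (∀ ψ₁ ψ₂ : ℂ × ℂ → ℂ, MemMultIdeal u ψ₁ → MemMultIdeal u ψ₂ →
      MemMultIdeal u (fun x => ψ₁ x + ψ₂ x)) ∧
    (∀ h ψ : ℂ × ℂ → ℂ, AnalyticAt ℂ h 0 → MemMultIdeal u ψ →
      MemMultIdeal u (fun x => h x * ψ x)) ∧
    (∀ (n : ℕ), 1 ≤ n → ∀ (ψ : ℂ × ℂ → ℂ) (a : Fin n → ℂ × ℂ → ℂ),
      AnalyticAt ℂ ψ 0 →
      (∀ i : Fin n, MemMultIdealPow u (i.val + 1) (a i)) →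
      (∀ᶠ x in 𝓝 (0 : ℂ × ℂ),
        ψ x ^ n + ∑ i : Fin n, a i x * ψ x ^ (n - (i.val + 1)) = 0) →
      MemMultIdeal u ψ) := by
  have hw : AEMeasurable (fun x => expE (((-2 : ℝ) : EReal) * u x)) (volume.restrict Ω) :=
    expE_monotone.measurable.comp_aemeasurable
      (aemeasurable_const.mul (hpsh.usc.aemeasurable hΩ))
  have hJ := fun ψ => memMultIdeal_iff (hΩ.mem_nhds h0) hw (ψ := ψ)
  refine ⟨⟨analyticAt_const, univ, univ_mem, by simp⟩, ?_, ?_, ?_⟩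
  · intro ψ₁ ψ₂ h₁ h₂
    rw [hJ] at h₁ h₂ ⊢
    exact ⟨h₁.1.add h₂.1, h₁.2.add h₂.2⟩
  · intro h ψ hh hψ
    rw [hJ] at hψ ⊢
    exact ⟨hh.mul hψ.1,
      hψ.2.mul (hh.continuousAt.memLpAtFilter_top hh.stronglyMeasurableAtFilter)⟩
  · intro n _ ψ a hψ ha heq
    exact (hJ ψ).2 ⟨hψ, memLpAtFilter_of_pow_add_sum_eq_zero hψ.stronglyMeasurableAtFilter
      (fun i => (ha i).memLpAtFilter (hΩ.mem_nhds h0) hw) heq⟩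

end
end
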